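/- Let c > 0 and let u be a nonnegative monotone submodular set function on a finite ground set N with u(∅) > 0 and u(S ∪ {j}) − u(S) ≤ u(∅)/c for all S ⊆ N and j ∈ N ∖ S. Let R be a random subset of N with independent inclusion probabilities p ∈ [0,1]^N. Then E[ E[u(R)] / u(R) ] ≤ 2 + 4/c (note u(R) ≥ u(∅) > 0 always, by monotonicity). -/

import Mathlib

open Finset MeasureTheory

/-- A set function `u` on a finite ground set is submodular if
`u(S ∩ T) + u(S ∪ T) ≤ u(S) + u(T)` for all `S, T`. -/
def Submodular {N : Type*} [DecidableEq N] (u : Finset N → ℝ) : Prop :=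
  ∀ S T : Finset N, u (S ∩ T) + u (S ∪ T) ≤ u S + u T

/-!
Let `A` be the random set, `a = u(∅)`, `μ = E u(A)` and `M = a / c`. A monotone submodular
function with marginals at most `M` is self-bounding: conditioning on one element and using the
law of total variance gives, by induction on the ground set, `Var u(A) ≤ M (μ - a)`.
Since `u(A) ≥ a`, pointwise `μ / u(A) ≤ 2 + 4 (u(A) - μ)² / (a μ)` (split at `u(A) = μ / 2`),
and taking expectations gives `E[μ / u(A)] ≤ 2 + 4 M / a = 2 + 4 / c`.
-/

namespace Submodular

variable {N : Type*} [DecidableEq N] {g : Finset N → ℝ}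

lemma comp_insert (hg : Submodular g) (j : N) : Submodular (fun S => g (insert j S)) :=
  fun S T => by
    simpa only [insert_inter_distrib, insert_union_distrib] using hg (insert j S) (insert j T)

lemma insert_sub_le_singleton (hg : Submodular g) {j : N} {S : Finset N} (hj : j ∉ S) :
    g (insert j S) - g S ≤ g {j} - g ∅ := by
  have := hg S {j}
  rw [inter_singleton_of_notMem hj, union_singleton] at this
  linarith

end Submodular

lemma measureReal_singleton_bool {q : ℝ} (hq : 0 ≤ q) {ν : Measure Bool} [IsProbabilityMeasure ν]
    (hν : ν {true} = ENNReal.ofReal q) (b : Bool) :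
    ν.real {b} = if b then q else 1 - q := by
  have htrue : ν.real {true} = q := by rw [measureReal_def, hν, ENNReal.toReal_ofReal hq]
  cases b
  · rw [show ({false} : Set Bool) = {true}ᶜ from (Bool.compl_singleton true).symm,
      probReal_compl_eq_one_sub (measurableSet_singleton _), htrue]
    rfl
  · exact htrue

lemma div_le_two_add_sq_sub {a x μ : ℝ} (ha : 0 < a) (hax : a ≤ x) (hμ : 0 < μ) :
    μ / x ≤ 2 + 4 / (a * μ) * (x - μ) ^ 2 := by
  have hx : 0 < x := ha.trans_le hax
  have hrest : 0 ≤ 4 / (a * μ) * (x - μ) ^ 2 := by positivity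
  rcases lt_or_ge (μ / 2) x with hbig | hsmall
  · have : μ / x < 2 := by rw [div_lt_iff₀ hx]; linarith
    linarith
  · have hsq : μ ^ 2 / 4 ≤ (x - μ) ^ 2 := by nlinarith
    calc μ / x ≤ μ / a := div_le_div_of_nonneg_left hμ.le ha hax
      _ = 4 / (a * μ) * (μ ^ 2 / 4) := by field_simp
      _ ≤ 4 / (a * μ) * (x - μ) ^ 2 := by gcongr
      _ ≤ 2 + 4 / (a * μ) * (x - μ) ^ 2 := by linarith

namespace RandomSubset

variable {N : Type*} [DecidableEq N] (p : N → ℝ)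

/-- The probability that the random subset of `s`, containing each `k ∈ s` independently with
probability `p k`, equals `A` (when `A ⊆ s`). -/
def weight (s A : Finset N) : ℝ := ∏ k ∈ s, if k ∈ A then p k else 1 - p k

def mean (s : Finset N) (g : Finset N → ℝ) : ℝ := ∑ A ∈ s.powerset, weight p s A * g A

variable {p}

lemma weight_insert {j : N} {s : Finset N} (hj : j ∉ s) (A : Finset N) :
    weight p (insert j s) A = (if j ∈ A then p j else 1 - p j) * weight p s A :=
  prod_insert hj

lemma weight_insert_outcome {j : N} {s : Finset N} (hj : j ∉ s) (A : Finset N) :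
    weight p s (insert j A) = weight p s A :=
  prod_congr rfl fun k hk => by simp only [mem_insert, ne_of_mem_of_not_mem hk hj, false_or]

lemma mean_empty (g : Finset N → ℝ) : mean p ∅ g = g ∅ := by
  simp [mean, weight]

lemma mean_insert {j : N} {s : Finset N} (hj : j ∉ s) (g : Finset N → ℝ) :
    mean p (insert j s) g =
      p j * mean p s (fun A => g (insert j A)) + (1 - p j) * mean p s g := by
  rw [mean, sum_powerset_insert hj, mean, mean, mul_sum, mul_sum, add_comm]
  congr 1 <;> refine sum_congr rfl fun A hA => ?_
  · rw [weight_insert hj, weight_insert_outcome hj, if_pos (mem_insert_self j A)]; ring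
  · rw [weight_insert hj, if_neg fun h => hj (mem_powerset.1 hA h)]; ring

lemma mean_const (s : Finset N) (a : ℝ) : mean p s (fun _ => a) = a := by
  induction s using Finset.induction with
  | empty => exact mean_empty _
  | insert j s hj ih => rw [mean_insert hj, ih]; ring

lemma mean_add (s : Finset N) (g h : Finset N → ℝ) :
    mean p s (fun A => g A + h A) = mean p s g + mean p s h := by
  simp only [mean, mul_add, sum_add_distrib]

lemma mean_const_mul (s : Finset N) (a : ℝ) (g : Finset N → ℝ) :
    mean p s (fun A => a * g A) = a * mean p s g := by
  simp only [mean, mul_sum]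
  exact sum_congr rfl fun _ _ => by ring

lemma mean_sub_sq (s : Finset N) (g : Finset N → ℝ) :
    mean p s (fun A => (g A - mean p s g) ^ 2) =
      mean p s (fun A => g A ^ 2) - mean p s g ^ 2 := by
  set m := mean p s g
  have hsq : ∀ A, (g A - m) ^ 2 = g A ^ 2 + (-2 * m * g A + m ^ 2) := fun A => by ring
  simp only [hsq, mean_add, mean_const_mul, mean_const]
  ring

lemma mean_mono (hp : ∀ j, 0 ≤ p j ∧ p j ≤ 1) {s : Finset N} {g h : Finset N → ℝ}
    (hgh : ∀ A ⊆ s, g A ≤ h A) : mean p s g ≤ mean p s h := by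
  induction s using Finset.induction generalizing g h with
  | empty => simpa only [mean_empty] using hgh ∅ subset_rfl
  | insert j s hj ih =>
    have h1 := ih fun A hA => hgh (insert j A) (insert_subset_insert j hA)
    have h0 := ih fun A hA => hgh A (hA.trans (subset_insert j s))
    rw [mean_insert hj, mean_insert hj]
    have := hp j
    gcongr <;> linarith

theorem variance_le_of_submodular (hp : ∀ j, 0 ≤ p j ∧ p j ≤ 1) {M : ℝ} (s : Finset N)
    {g : Finset N → ℝ} (hmono : Monotone g) (hsub : Submodular g)
    (hM : ∀ S j, g (insert j S) - g S ≤ M) :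
    mean p s (fun A => (g A - mean p s g) ^ 2) ≤ M * (mean p s g - g ∅) := by
  induction s using Finset.induction generalizing g with
  | empty => simp [mean_empty]
  | insert j s hj ih =>
    have ih1 := ih (g := fun A => g (insert j A)) (fun _ _ h => hmono (insert_subset_insert j h))
      (hsub.comp_insert j) fun S k => by simpa only [insert_comm] using hM (insert j S) k
    have ih0 := ih hmono hsub hM
    rw [insert_empty] at ih1
    rw [mean_sub_sq] at ih1 ih0 ⊢
    rw [mean_insert hj, mean_insert hj]
    set m1 := mean p s (fun A => g (insert j A))
    set m0 := mean p s g
    have hlo : m0 ≤ m1 := mean_mono hp fun A _ => hmono (subset_insert j A)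
    have hhi : m1 ≤ m0 + M := by
      rw [← mean_const s M, ← mean_add]
      exact mean_mono hp fun A _ => by linarith [hM A j]
    have hsj : m1 ≤ m0 + (g {j} - g ∅) := by
      rw [← mean_const s (g {j} - g ∅), ← mean_add]
      exact mean_mono hp fun A hA => by
        linarith [hsub.insert_sub_le_singleton fun h => hj (hA h)]
    have hd : (m1 - m0) ^ 2 ≤ M * (g {j} - g ∅) := by
      nlinarith [mul_le_mul_of_nonneg_left (sub_le_iff_le_add'.2 hhi) (sub_nonneg.2 hlo)]
    obtain ⟨hp0, hp1⟩ := hp j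
    -- law of total variance: the conditional variances plus `p (1 - p) (m1 - m0)²`
    nlinarith [mul_le_mul_of_nonneg_left ih1 hp0, mul_le_mul_of_nonneg_left ih0 (sub_nonneg.2 hp1),
      mul_le_mul_of_nonneg_left hd hp0, mul_nonneg (mul_nonneg hp0 hp0) (sq_nonneg (m1 - m0))]

theorem integral_pi_eq_mean [Fintype N] (hp : ∀ j, 0 ≤ p j) {ν : N → Measure Bool}
    [∀ j, IsProbabilityMeasure (ν j)] (hν : ∀ j, ν j {true} = ENNReal.ofReal (p j))
    (F : Finset N → ℝ) :
    ∫ ω, F (univ.filter fun j => ω j = true) ∂(Measure.pi ν) = mean p univ F := by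
  let e : (N → Bool) ≃ Finset N :=
    { toFun := fun ω => univ.filter fun j => ω j = true
      invFun := fun A j => decide (j ∈ A)
      left_inv := fun ω => by ext; simp
      right_inv := fun A => by ext; simp }
  rw [integral_fintype Integrable.of_finite, mean, powerset_univ]
  refine Fintype.sum_equiv e _ _ fun ω => ?_
  rw [measureReal_def, Measure.pi_singleton, ENNReal.toReal_prod, smul_eq_mul]
  congr 1
  refine prod_congr rfl fun j _ => ?_
  rw [← measureReal_def, measureReal_singleton_bool (hp j) (hν j)]
  simp [e]

end RandomSubset

open RandomSubset

theorem expectation_inverse_bound_general {N : Type*} [Fintype N] [DecidableEq N]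
    (c : ℝ) (hc : 0 < c)
    (u : Finset N → ℝ) (hmono : Monotone u) (hsub : Submodular u)
    (hne : 0 < u ∅)
    (hM : ∀ (S : Finset N), ∀ j ∉ S, u (insert j S) - u S ≤ u ∅ / c)
    (p : N → ℝ) (hp : ∀ j, 0 ≤ p j ∧ p j ≤ 1)
    (ν : N → Measure Bool) [∀ j, IsProbabilityMeasure (ν j)]
    (hν : ∀ j, ν j ({true} : Set Bool) = ENNReal.ofReal (p j)) :
    ∫ ω, (∫ ω', u (Finset.univ.filter (fun j => ω' j = true)) ∂(Measure.pi ν))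
        / u (Finset.univ.filter (fun j => ω j = true)) ∂(Measure.pi ν)
      ≤ 2 + 4 / c := by
  have hlow : ∀ A, u ∅ ≤ u A := fun A => hmono (empty_subset A)
  have hmarg : ∀ S j, u (insert j S) - u S ≤ u ∅ / c := fun S j => by
    by_cases hj : j ∈ S
    · rw [insert_eq_of_mem hj, sub_self]; positivity
    · exact hM S j hj
  have hvar := variance_le_of_submodular hp univ hmono hsub hmarg
  rw [integral_pi_eq_mean (fun j => (hp j).1) hν u]
  set μ := mean p univ u
  refine (integral_pi_eq_mean (fun j => (hp j).1) hν fun A => μ / u A).trans_le ?_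
  have hμ : u ∅ ≤ μ := by simpa only [mean_const] using mean_mono hp (s := univ) fun A _ => hlow A
  have hμ0 : 0 < μ := hne.trans_le hμ
  calc mean p univ (fun A => μ / u A)
      ≤ mean p univ (fun A => 2 + 4 / (u ∅ * μ) * (u A - μ) ^ 2) :=
        mean_mono hp fun A _ => div_le_two_add_sq_sub hne (hlow A) hμ0
    _ = 2 + 4 / (u ∅ * μ) * mean p univ (fun A => (u A - μ) ^ 2) := by
        rw [mean_add, mean_const, mean_const_mul]
    _ ≤ 2 + 4 / (u ∅ * μ) * (u ∅ / c * (μ - u ∅)) := by gcongr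
    _ = 2 + 4 / c * (1 - u ∅ / μ) := by field_simp
    _ ≤ 2 + 4 / c := by nlinarith [div_pos four_pos hc, div_nonneg hne.le hμ0.le]

/-- for a nonnegative monotone submodular `u` with `u(∅) > 0` and marginal
values bounded by `u(∅)/c`, and `R` a random subset with independent inclusion
probabilities `p` (modelled by the product of Bernoulli measures),
`E[ E[u(R)] / u(R) ] ≤ 2 + 4/c`. -/
theorem expectation_inverse_bound {N : Type*} [Fintype N] [DecidableEq N]
    (c : ℝ) (hc : 0 < c)
    (u : Finset N → ℝ) (hnn : ∀ S, 0 ≤ u S) (hmono : Monotone u) (hsub : Submodular u)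
    (hne : 0 < u ∅)
    (hM : ∀ (S : Finset N), ∀ j ∉ S, u (insert j S) - u S ≤ u ∅ / c)
    (p : N → ℝ) (hp : ∀ j, 0 ≤ p j ∧ p j ≤ 1)
    (ν : N → Measure Bool) [∀ j, IsProbabilityMeasure (ν j)]
    (hν : ∀ j, ν j ({true} : Set Bool) = ENNReal.ofReal (p j)) :
    ∫ ω, (∫ ω', u (Finset.univ.filter (fun j => ω' j = true)) ∂(Measure.pi ν))
        / u (Finset.univ.filter (fun j => ω j = true)) ∂(Measure.pi ν)
      ≤ 2 + 4 / c :=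
  expectation_inverse_bound_general c hc u hmono hsub hne hM p hp ν hν
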